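/- arXiv:1803.01613 — 6 statements merged into one kernel-verified Lean document; each statement's English description precedes it below -/
import Mathlib

section
/- Every tuple (c₂, a₂₁, γ, b₁, b₂) ∈ ℝ⁵ satisfying the consistency and order-3 conditions of a 3-stage stiffly accurate ESDIRK method, namely c₂ = a₂₁ + γ, b₁ + b₂ + γ = 1, b₂c₂ + γ = 1/2, b₂c₂² + γ = 1/3, and 2b₂c₂γ + γ² = 1/6, has γ = (3+√3)/6 or γ = (3−√3)/6, and in both cases a₂₁b₂ − b₁γ ≠ 0. Consequently, no 3-stage stiffly accurate ESDIRK method of order 3 satisfies the L-stability condition a₂₁b₂ − b₁γ = 0. -/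
/-!
The order conditions give b₂c₂ = 1/2 − γ, and substituting this into 2b₂c₂γ + γ² = 1/6 leaves
γ² − γ + 1/6 = 0. Eliminating a₂₁ and b₁ by the consistency conditions turns the L-stability
coefficient into a₂₁b₂ − b₁γ = γ² − 2γ + 1/2; its common roots with γ² − γ + 1/6 would have
γ = 1/3, which is not a root.
-/

theorem sq_sub_self_add_one_sixth_eq_zero_iff (x : ℝ) :
    x ^ 2 - x + 1 / 6 = 0 ↔ x = (3 + Real.sqrt 3) / 6 ∨ x = (3 - Real.sqrt 3) / 6 := by
  have hs : Real.sqrt 3 ^ 2 = 3 := Real.sq_sqrt (by norm_num)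
  have hfactor : x ^ 2 - x + 1 / 6 = (x - (3 + Real.sqrt 3) / 6) * (x - (3 - Real.sqrt 3) / 6) := by
    linear_combination (1 / 36 : ℝ) * hs
  rw [hfactor, mul_eq_zero, sub_eq_zero, sub_eq_zero]

theorem esdirk_gamma_quadratic {γ b₂ c₂ : ℝ} (h2 : b₂ * c₂ + γ = 1 / 2)
    (h3b : 2 * b₂ * c₂ * γ + γ ^ 2 = 1 / 6) : γ ^ 2 - γ + 1 / 6 = 0 := by
  linear_combination (-1 : ℝ) * h3b + 2 * γ * h2

theorem esdirk_stability_coeff_eq {c₂ a₂₁ γ b₁ b₂ : ℝ} (hcons : c₂ = a₂₁ + γ)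
    (h1 : b₁ + b₂ + γ = 1) (h2 : b₂ * c₂ + γ = 1 / 2) :
    a₂₁ * b₂ - b₁ * γ = γ ^ 2 - 2 * γ + 1 / 2 := by
  linear_combination (-b₂) * hcons + (-γ) * h1 + h2

theorem esdirk_three_stage_order3_not_Lstable_general
    (c₂ a₂₁ γ b₁ b₂ : ℝ)
    (hcons : c₂ = a₂₁ + γ)
    (h1 : b₁ + b₂ + γ = 1)
    (h2 : b₂ * c₂ + γ = 1 / 2)
    (h3b : 2 * b₂ * c₂ * γ + γ ^ 2 = 1 / 6) :
    (γ = (3 + Real.sqrt 3) / 6 ∨ γ = (3 - Real.sqrt 3) / 6) ∧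
      a₂₁ * b₂ - b₁ * γ ≠ 0 := by
  have hγ := esdirk_gamma_quadratic h2 h3b
  refine ⟨(sq_sub_self_add_one_sixth_eq_zero_iff γ).mp hγ, fun hL => ?_⟩
  rw [esdirk_stability_coeff_eq hcons h1 h2] at hL
  have hthird : γ = 1 / 3 := by linear_combination hγ - hL
  rw [hthird] at hγ
  norm_num at hγ

/-- Any 3-stage stiffly accurate ESDIRK method of order 3 has
γ = (3 ± √3)/6, and in both cases the L-stability condition
a₂₁b₂ − b₁γ = 0 fails. Hence no 3-stage stiffly accurate ESDIRK method
of order 3 is L-stable. -/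
theorem esdirk_three_stage_order3_not_Lstable
    (c₂ a₂₁ γ b₁ b₂ : ℝ)
    (hcons : c₂ = a₂₁ + γ)
    (h1 : b₁ + b₂ + γ = 1)
    (h2 : b₂ * c₂ + γ = 1 / 2)
    (h3a : b₂ * c₂ ^ 2 + γ = 1 / 3)
    (h3b : 2 * b₂ * c₂ * γ + γ ^ 2 = 1 / 6) :
    (γ = (3 + Real.sqrt 3) / 6 ∨ γ = (3 - Real.sqrt 3) / 6) ∧
      a₂₁ * b₂ - b₁ * γ ≠ 0 :=
  esdirk_three_stage_order3_not_Lstable_general c₂ a₂₁ γ b₁ b₂ hcons h1 h2 h3b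
end

section
/- The system in the unknowns (c₂, a₂₁, γ, b₁, b₂) ∈ ℝ⁵ consisting of the L-stability condition a₂₁b₂ = b₁γ, the order-1 condition b₁ + b₂ + γ = 1, the order-2 condition b₂c₂ + γ = 1/2, the consistency condition a₂₁ + γ = c₂, the stage-order-2 condition c₂ = 2γ, and c₂ ≠ 0, has exactly two solutions, characterized by γ = (2+√2)/2 and γ = (2−√2)/2 respectively. The unique solution additionally satisfying 0 < c₂ < 1 is γ = a₂₁ = (2−√2)/2, c₂ = 2−√2, b₁ = b₂ = √2/4 (the ESDIRK23 method). -/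
/-!
Consistency and stage order give `a₂₁ = γ`; since `γ ≠ 0`, L-stability then forces `b₁ = b₂`,
so the order-1 condition gives `b₁ = b₂ = (1 - γ)/2` and the order-2 condition becomes
`2γ² - 4γ + 1 = 0`, with roots `(2 ± √2)/2`. Only the smaller root puts `c₂ = 2γ` in `(0, 1)`.
-/

open Real

lemma two_mul_sq_sub_four_mul_add_one_eq_zero_iff (γ : ℝ) :
    2 * γ ^ 2 - 4 * γ + 1 = 0 ↔ γ = (2 + √2) / 2 ∨ γ = (2 - √2) / 2 := by
  have hfactor : 2 * γ ^ 2 - 4 * γ + 1 = 2 * ((γ - (2 + √2) / 2) * (γ - (2 - √2) / 2)) := by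
    linear_combination (1 / 2) * sq_sqrt (zero_le_two : (0 : ℝ) ≤ 2)
  rw [hfactor, mul_eq_zero, mul_eq_zero, sub_eq_zero, sub_eq_zero]
  simp only [two_ne_zero, false_or]

lemma esdirk_conditions_iff (c₂ a₂₁ γ b₁ b₂ : ℝ) :
    (a₂₁ * b₂ = b₁ * γ ∧ b₁ + b₂ + γ = 1 ∧ b₂ * c₂ + γ = 1 / 2 ∧
        a₂₁ + γ = c₂ ∧ c₂ = 2 * γ ∧ c₂ ≠ 0) ↔
      ((γ = (2 + √2) / 2 ∨ γ = (2 - √2) / 2) ∧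
        c₂ = 2 * γ ∧ a₂₁ = γ ∧ b₁ = (1 - γ) / 2 ∧ b₂ = (1 - γ) / 2) := by
  constructor
  · rintro ⟨hL, hord₁, hord₂, hcons, hc, hc₀⟩
    have hγ₀ : γ ≠ 0 := fun h => hc₀ (by rw [hc, h, mul_zero])
    have ha : a₂₁ = γ := by linarith
    have hb : b₂ = b₁ := mul_left_cancel₀ hγ₀ (by linear_combination hL - b₂ * ha)
    have hb₂ : b₂ = (1 - γ) / 2 := by linarith
    have hq : 2 * γ ^ 2 - 4 * γ + 1 = 0 := by
      rw [hb₂, hc] at hord₂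
      linear_combination -2 * hord₂
    exact ⟨(two_mul_sq_sub_four_mul_add_one_eq_zero_iff γ).1 hq, hc, ha, by linarith, hb₂⟩
  · rintro ⟨hroot, hc, rfl, rfl, rfl⟩
    have hq := (two_mul_sq_sub_four_mul_add_one_eq_zero_iff a₂₁).2 hroot
    have hγ₀ : a₂₁ ≠ 0 := by rintro rfl; norm_num at hq
    subst hc
    exact ⟨by ring, by ring, by linear_combination (-1 / 2) * hq, by ring, rfl,
      mul_ne_zero two_ne_zero hγ₀⟩

lemma two_mul_mem_Ioo_iff {γ : ℝ} (hroot : γ = (2 + √2) / 2 ∨ γ = (2 - √2) / 2) :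
    (0 < 2 * γ ∧ 2 * γ < 1) ↔ γ = (2 - √2) / 2 := by
  constructor
  · rintro ⟨-, hlt⟩
    rcases hroot with rfl | h
    · linarith [sqrt_nonneg 2]
    · exact h
  · rintro rfl
    constructor <;> linarith [one_lt_sqrt_two, sqrt_two_lt_three_halves]

/-- The system defining a 2nd-order, L-stable, stiffly accurate 3-stage ESDIRK
method with stage order 2 has exactly two solutions, characterized by
γ = (2 ± √2)/2; the unique solution with 0 < c₂ < 1 is the ESDIRK23 method:
γ = a₂₁ = (2−√2)/2, c₂ = 2−√2, b₁ = b₂ = √2/4. -/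
theorem esdirk23_characterization :
    (∀ c₂ a₂₁ γ b₁ b₂ : ℝ,
        (a₂₁ * b₂ = b₁ * γ ∧ b₁ + b₂ + γ = 1 ∧ b₂ * c₂ + γ = 1 / 2 ∧
          a₂₁ + γ = c₂ ∧ c₂ = 2 * γ ∧ c₂ ≠ 0) ↔
        ((γ = (2 + Real.sqrt 2) / 2 ∨ γ = (2 - Real.sqrt 2) / 2) ∧
          c₂ = 2 * γ ∧ a₂₁ = γ ∧ b₁ = (1 - γ) / 2 ∧ b₂ = (1 - γ) / 2)) ∧
    (∀ c₂ a₂₁ γ b₁ b₂ : ℝ,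
        (a₂₁ * b₂ = b₁ * γ ∧ b₁ + b₂ + γ = 1 ∧ b₂ * c₂ + γ = 1 / 2 ∧
          a₂₁ + γ = c₂ ∧ c₂ = 2 * γ ∧ c₂ ≠ 0 ∧ 0 < c₂ ∧ c₂ < 1) ↔
        (γ = (2 - Real.sqrt 2) / 2 ∧ a₂₁ = (2 - Real.sqrt 2) / 2 ∧
          c₂ = 2 - Real.sqrt 2 ∧ b₁ = Real.sqrt 2 / 4 ∧ b₂ = Real.sqrt 2 / 4)) := by
  refine ⟨esdirk_conditions_iff, fun c₂ a₂₁ γ b₁ b₂ => ⟨?_, ?_⟩⟩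
  · rintro ⟨hL, hord₁, hord₂, hcons, hc, hc₀, hpos, hlt⟩
    obtain ⟨hroot, hc, ha, hb₁, hb₂⟩ :=
      (esdirk_conditions_iff c₂ a₂₁ γ b₁ b₂).1 ⟨hL, hord₁, hord₂, hcons, hc, hc₀⟩
    have hγ := (two_mul_mem_Ioo_iff hroot).1 ⟨hc ▸ hpos, hc ▸ hlt⟩
    subst hγ
    exact ⟨rfl, ha, by rw [hc]; ring, by rw [hb₁]; ring, by rw [hb₂]; ring⟩
  · rintro ⟨hγ, ha, hc, hb₁, hb₂⟩
    obtain ⟨hL, hord₁, hord₂, hcons, hc', hc₀⟩ :=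
      (esdirk_conditions_iff c₂ a₂₁ γ b₁ b₂).2 ⟨Or.inr hγ, by rw [hc, hγ]; ring, ha.trans hγ.symm,
        by rw [hb₁, hγ]; ring, by rw [hb₂, hγ]; ring⟩
    obtain ⟨hpos, hlt⟩ := (two_mul_mem_Ioo_iff (Or.inr hγ)).2 hγ
    exact ⟨hL, hord₁, hord₂, hcons, hc', hc₀, hc' ▸ hpos, hc' ▸ hlt⟩
end

section
/- Let γ, c₂, b₂, b̂₂, b̂₃ ∈ ℝ satisfy c₂ = 2γ and b₂c₂ + γ = 1/2. If b̂₂c₂² + b̂₃ = 1/3, then b̂₂(c₂γ) + b̂₃(c₂b₂ + γ) = 1/6. In other words, for a 3-stage stiffly accurate ESDIRK method with stage order 2 in the second stage and an order-2 advancing method, the fourth embedded order-3 condition is linearly dependent on the third. -/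
/-- For a 3-stage stiffly accurate ESDIRK method with stage order 2 in the second
stage (c₂ = 2γ) and a 2nd-order advancing method (b₂c₂ + γ = 1/2), the fourth
embedded order-3 condition follows from the third one: if b̂₂c₂² + b̂₃ = 1/3, then
b̂₂(c₂γ) + b̂₃(c₂b₂ + γ) = 1/6. -/
theorem esdirk23_embedded_condition_dependent
    (γ c₂ b₂ bh₂ bh₃ : ℝ)
    (hc₂ : c₂ = 2 * γ)
    (horder2 : b₂ * c₂ + γ = 1 / 2)
    (h3 : bh₂ * c₂ ^ 2 + bh₃ = 1 / 3) :
    bh₂ * (c₂ * γ) + bh₃ * (c₂ * b₂ + γ) = 1 / 6 := by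
  -- With c₂ = 2γ we have c₂γ = c₂²/2 and c₂b₂ + γ = 1/2, so the goal is half of `h3`.
  subst hc₂
  linear_combination (1 / 2) * h3 + bh₃ * horder2
end

section
/- Let γ = (2−√2)/2, c = (0, 2γ, 1), and b = ((1−γ)/2, (1−γ)/2, γ). There is a unique matrix B̄ = [b̄₁ b̄₂] ∈ ℝ^{3×2} such that the polynomial b̄(θ) = b̄₁θ + b̄₂θ² satisfies for all θ ∈ ℝ: b̄(θ)ᵀe = θ and b̄(θ)ᵀc = θ²/2 (the order-2 continuous-extension conditions), together with the side conditions b̄(1) = b and b̄(2γ) = (γ, γ, 0)ᵀ (interpolation of the second internal stage). This unique solution is b̄₁ = (√2/2, √2/2, 1−√2)ᵀ and b̄₂ = (−√2/4, −√2/4, √2/2)ᵀ. -/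
open Matrix

/-!
The two interpolation conditions alone pin the extension down: `θ ↦ θ • b̄₁ + θ ^ 2 • b̄₂`
vanishes at `θ = 0`, so its values at the two further distinct nodes `1` and `2γ` determine it.
Existence is a direct check of all conditions on the claimed coefficients.
-/

theorem eq_of_smul_add_sq_smul_eq_of_smul_add_sq_smul_eq {K M : Type*} [Field K]
    [AddCommGroup M] [Module K M] {θ₁ θ₂ : K} (hθ₁ : θ₁ ≠ 0) (hθ₂ : θ₂ ≠ 0) (hθ : θ₁ ≠ θ₂)
    {x y x' y' : M} (h₁ : θ₁ • x + θ₁ ^ 2 • y = θ₁ • x' + θ₁ ^ 2 • y')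
    (h₂ : θ₂ • x + θ₂ ^ 2 • y = θ₂ • x' + θ₂ ^ 2 • y') : x = x' ∧ y = y' := by
  have cancel_node (θ : K) (hθ : θ ≠ 0) (h : θ • x + θ ^ 2 • y = θ • x' + θ ^ 2 • y') :
      x - x' + θ • (y - y') = 0 :=
    (smul_eq_zero.mp (by linear_combination (norm := module) h)).resolve_left hθ
  have hd₁ := cancel_node θ₁ hθ₁ h₁
  have hd₂ := cancel_node θ₂ hθ₂ h₂
  have hy : y - y' = 0 :=
    (smul_eq_zero.mp (by linear_combination (norm := module) hd₁ - hd₂ :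
      (θ₁ - θ₂) • (y - y') = 0)).resolve_left (sub_ne_zero.mpr hθ)
  rw [hy, smul_zero, add_zero] at hd₁
  exact ⟨sub_eq_zero.mp hd₁, sub_eq_zero.mp hy⟩

/-- The unique 2nd-order continuous extension of ESDIRK23 satisfying b̄(1) = b and
b̄(2γ) = (γ, γ, 0) (interpolation of the second internal stage) has coefficients
b̄₁ = (√2/2, √2/2, 1−√2) and b̄₂ = (−√2/4, −√2/4, √2/2). -/
theorem esdirk23_order2_continuous_extension
    (γ : ℝ) (hγ : γ = (2 - Real.sqrt 2) / 2)
    (c : Fin 3 → ℝ) (hc : c = ![0, 2 * γ, 1])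
    (b : Fin 3 → ℝ) (hb : b = ![(1 - γ) / 2, (1 - γ) / 2, γ])
    (e : Fin 3 → ℝ) (he : e = ![1, 1, 1]) :
    ∀ b₁ b₂ : Fin 3 → ℝ,
      ((∀ θ : ℝ, (θ • b₁ + θ ^ 2 • b₂) ⬝ᵥ e = θ ∧
          (θ • b₁ + θ ^ 2 • b₂) ⬝ᵥ c = θ ^ 2 / 2) ∧
        b₁ + b₂ = b ∧
        (2 * γ) • b₁ + (2 * γ) ^ 2 • b₂ = ![γ, γ, 0]) ↔
      (b₁ = ![Real.sqrt 2 / 2, Real.sqrt 2 / 2, 1 - Real.sqrt 2] ∧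
        b₂ = ![-(Real.sqrt 2 / 4), -(Real.sqrt 2 / 4), Real.sqrt 2 / 2]) := by
  have hs : Real.sqrt 2 ^ 2 = 2 := Real.sq_sqrt zero_le_two
  have hs₁ := Real.one_lt_sqrt_two
  subst hγ hc hb he
  intro b₁ b₂
  set b₁' : Fin 3 → ℝ := ![Real.sqrt 2 / 2, Real.sqrt 2 / 2, 1 - Real.sqrt 2]
  set b₂' : Fin 3 → ℝ := ![-(Real.sqrt 2 / 4), -(Real.sqrt 2 / 4), Real.sqrt 2 / 2]
  have hsum : b₁' + b₂' = ![(1 - (2 - Real.sqrt 2) / 2) / 2, (1 - (2 - Real.sqrt 2) / 2) / 2,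
      (2 - Real.sqrt 2) / 2] := by
    ext i
    fin_cases i <;> simp only [b₁', b₂', Pi.add_apply, Fin.isValue, Fin.zero_eta, Fin.mk_one,
      Fin.reduceFinMk, cons_val_zero, cons_val_one, cons_val_two, head_cons, tail_cons] <;> ring
  have hstage : (2 * ((2 - Real.sqrt 2) / 2)) • b₁' + (2 * ((2 - Real.sqrt 2) / 2)) ^ 2 • b₂' =
      ![(2 - Real.sqrt 2) / 2, (2 - Real.sqrt 2) / 2, 0] := by
    ext i
    fin_cases i <;> simp only [b₁', b₂', Pi.add_apply, Pi.smul_apply, smul_eq_mul, Fin.isValue,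
      Fin.zero_eta, Fin.mk_one, Fin.reduceFinMk, cons_val_zero, cons_val_one, cons_val_two,
      head_cons, tail_cons]
    · linear_combination (1 / 2 - Real.sqrt 2 / 4) * hs
    · linear_combination (1 / 2 - Real.sqrt 2 / 4) * hs
    · linear_combination (Real.sqrt 2 / 2 - 1) * hs
  constructor
  · rintro ⟨-, h₁, h₂⟩
    exact eq_of_smul_add_sq_smul_eq_of_smul_add_sq_smul_eq one_ne_zero (by nlinarith)
      (by nlinarith) (by simpa only [one_smul, one_pow, hsum] using h₁) (h₂.trans hstage.symm)
  · rintro ⟨rfl, rfl⟩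
    refine ⟨fun θ => ?_, hsum, hstage⟩
    simp only [b₁', b₂', dotProduct, Fin.sum_univ_three, Pi.add_apply, Pi.smul_apply, smul_eq_mul,
      Fin.isValue, cons_val_zero, cons_val_one, cons_val_two, head_cons, tail_cons]
    constructor
    · ring
    · linear_combination (θ ^ 2 / 4 - θ / 2) * hs
end

section
/- Let γ = (2−√2)/2, c = (0, 2γ, 1), A = [[0,0,0],[γ,γ,0],[(1−γ)/2,(1−γ)/2,γ]], b = ((1−γ)/2, (1−γ)/2, γ), and b̂ = ((6γ−1)/(12γ), 1/(12γ(1−2γ)), (1−3γ)/(3(1−2γ))) (the ESDIRK23 method and its embedded weights). There is a unique B̄ = [b̄₁ b̄₂ b̄₃] ∈ ℝ^{3×3} such that b̄(θ) = b̄₁θ + b̄₂θ² + b̄₃θ³ satisfies for all θ ∈ ℝ the order-3 conditions b̄(θ)ᵀe = θ, b̄(θ)ᵀCe = θ²/2, b̄(θ)ᵀC²e = θ³/3, and b̄(θ)ᵀACe = θ³/6, where C = diag(c) and e = (1,1,1)ᵀ. This unique order-3 continuous extension satisfies b̄(1) = b̂; consequently there exists no order-3 continuous extension with b̄(1) = b.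 -/
/-!
Comparing coefficients of `θ`, the order conditions prescribe the products of each coefficient
vector `b̄ₖ` with `e`, `c`, `c²` and `Ac`. The nodes `0, 2γ, 1` are distinct, so the first three
products form an invertible Vandermonde system: there is at most one extension. Solving that
system gives the candidate, and the condition on `Ac` holds for it because `γ` is a root of
`2γ² - 4γ + 1`. Its value at `θ = 1` is `((γ + 1)/6, (5 - 3γ)/6, γ/3)`, which is `b̂` after the
same reduction and whose last entry differs from `b₃ = γ`.
-/

open Matrix

def IsOrderThreeExtension {ι : Type*} [Fintype ι] (A : Matrix ι ι ℝ) (c : ι → ℝ)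
    (b₁ b₂ b₃ : ι → ℝ) : Prop :=
  ∀ θ : ℝ,
    (θ • b₁ + θ ^ 2 • b₂ + θ ^ 3 • b₃) ⬝ᵥ 1 = θ ∧
    (θ • b₁ + θ ^ 2 • b₂ + θ ^ 3 • b₃) ⬝ᵥ c = θ ^ 2 / 2 ∧
    (θ • b₁ + θ ^ 2 • b₂ + θ ^ 3 • b₃) ⬝ᵥ (fun i => c i ^ 2) = θ ^ 3 / 3 ∧
    (θ • b₁ + θ ^ 2 • b₂ + θ ^ 3 • b₃) ⬝ᵥ (A *ᵥ c) = θ ^ 3 / 6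

theorem cubic_coeffs_eq {x y z p q r : ℝ}
    (h : ∀ θ : ℝ, θ * x + θ ^ 2 * y + θ ^ 3 * z = θ * p + θ ^ 2 * q + θ ^ 3 * r) :
    (x, y, z) = (p, q, r) := by
  have h₁ := h 1
  have h₂ := h (-1)
  have h₃ := h 2
  simp only [Prod.mk.injEq]
  refine ⟨?_, ?_, ?_⟩ <;> linarith

section
variable {ι : Type*} [Fintype ι]

theorem dotProduct_cubic (θ : ℝ) (b₁ b₂ b₃ v : ι → ℝ) :
    (θ • b₁ + θ ^ 2 • b₂ + θ ^ 3 • b₃) ⬝ᵥ v =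
      θ * (b₁ ⬝ᵥ v) + θ ^ 2 * (b₂ ⬝ᵥ v) + θ ^ 3 * (b₃ ⬝ᵥ v) := by
  simp only [add_dotProduct, smul_dotProduct, smul_eq_mul]

theorem isOrderThreeExtension_iff {A : Matrix ι ι ℝ} {c b₁ b₂ b₃ : ι → ℝ} :
    IsOrderThreeExtension A c b₁ b₂ b₃ ↔
      (b₁ ⬝ᵥ 1, b₂ ⬝ᵥ 1, b₃ ⬝ᵥ 1) = (1, 0, 0) ∧
      (b₁ ⬝ᵥ c, b₂ ⬝ᵥ c, b₃ ⬝ᵥ c) = (0, 1 / 2, 0) ∧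
      (b₁ ⬝ᵥ (fun i => c i ^ 2), b₂ ⬝ᵥ (fun i => c i ^ 2), b₃ ⬝ᵥ (fun i => c i ^ 2)) =
        (0, 0, 1 / 3) ∧
      (b₁ ⬝ᵥ (A *ᵥ c), b₂ ⬝ᵥ (A *ᵥ c), b₃ ⬝ᵥ (A *ᵥ c)) = (0, 0, 1 / 6) := by
  simp only [IsOrderThreeExtension, dotProduct_cubic]
  constructor
  · intro h
    exact ⟨cubic_coeffs_eq fun θ => by linear_combination (h θ).1,
      cubic_coeffs_eq fun θ => by linear_combination (h θ).2.1,
      cubic_coeffs_eq fun θ => by linear_combination (h θ).2.2.1,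
      cubic_coeffs_eq fun θ => by linear_combination (h θ).2.2.2⟩
  · simp only [Prod.mk.injEq]
    rintro ⟨⟨he₁, he₂, he₃⟩, ⟨hc₁, hc₂, hc₃⟩, ⟨hs₁, hs₂, hs₃⟩, ⟨ha₁, ha₂, ha₃⟩⟩ θ
    simp only [he₁, he₂, he₃, hc₁, hc₂, hc₃, hs₁, hs₂, hs₃, ha₁, ha₂, ha₃]
    refine ⟨?_, ?_, ?_, ?_⟩ <;> ring

end

theorem eq_of_dotProduct_powers_eq {c v w : Fin 3 → ℝ} (hc : Function.Injective c)
    (h₀ : v ⬝ᵥ 1 = w ⬝ᵥ 1) (h₁ : v ⬝ᵥ c = w ⬝ᵥ c)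
    (h₂ : v ⬝ᵥ (fun i => c i ^ 2) = w ⬝ᵥ (fun i => c i ^ 2)) : v = w := by
  rw [← sub_eq_zero]
  refine eq_zero_of_forall_pow_sum_mul_pow_eq_zero hc fun j => ?_
  fin_cases j
  · simpa [dotProduct, Fin.sum_univ_three, sub_mul] using sub_eq_zero.2 h₀
  · simpa [dotProduct, Fin.sum_univ_three, sub_mul] using sub_eq_zero.2 h₁
  · simpa [dotProduct, Fin.sum_univ_three, sub_mul] using sub_eq_zero.2 h₂

theorem IsOrderThreeExtension.unique {A : Matrix (Fin 3) (Fin 3) ℝ} {c : Fin 3 → ℝ}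
    (hc : Function.Injective c) {b₁ b₂ b₃ b₁' b₂' b₃' : Fin 3 → ℝ}
    (h : IsOrderThreeExtension A c b₁ b₂ b₃) (h' : IsOrderThreeExtension A c b₁' b₂' b₃') :
    (b₁, b₂, b₃) = (b₁', b₂', b₃') := by
  simp only [isOrderThreeExtension_iff, Prod.mk.injEq] at h h' ⊢
  obtain ⟨⟨e₁, e₂, e₃⟩, ⟨c₁, c₂, c₃⟩, ⟨s₁, s₂, s₃⟩, -⟩ := h
  obtain ⟨⟨e₁', e₂', e₃'⟩, ⟨c₁', c₂', c₃'⟩, ⟨s₁', s₂', s₃'⟩, -⟩ := h'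
  exact ⟨eq_of_dotProduct_powers_eq hc (e₁.trans e₁'.symm) (c₁.trans c₁'.symm) (s₁.trans s₁'.symm),
    eq_of_dotProduct_powers_eq hc (e₂.trans e₂'.symm) (c₂.trans c₂'.symm) (s₂.trans s₂'.symm),
    eq_of_dotProduct_powers_eq hc (e₃.trans e₃'.symm) (c₃.trans c₃'.symm) (s₃.trans s₃'.symm)⟩

section ESDIRK23

variable {γ : ℝ}

theorem ne_zero_of_esdirk23 (hγ : 2 * γ ^ 2 - 4 * γ + 1 = 0) : γ ≠ 0 := by
  rintro rfl
  norm_num at hγ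

theorem two_mul_ne_one_of_esdirk23 (hγ : 2 * γ ^ 2 - 4 * γ + 1 = 0) : 2 * γ ≠ 1 := by
  intro h
  nlinarith

theorem esdirk23_nodes_injective (hγ : 2 * γ ^ 2 - 4 * γ + 1 = 0) :
    Function.Injective ![0, 2 * γ, 1] := by
  have h₀ := ne_zero_of_esdirk23 hγ
  have h₁ := two_mul_ne_one_of_esdirk23 hγ
  intro i j h
  fin_cases i <;> fin_cases j <;> simp [h₀, h₁, h₁.symm] at h ⊢

noncomputable def esdirk23DenseWeights (γ : ℝ) : (Fin 3 → ℝ) × (Fin 3 → ℝ) × (Fin 3 → ℝ) :=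
  (![1, 0, 0], ![(γ - 3) / 2, (5 - 3 * γ) / 2, γ - 1],
    ![(2 - γ) / 3, (3 * γ - 5) / 3, (3 - 2 * γ) / 3])

theorem isOrderThreeExtension_esdirk23DenseWeights (hγ : 2 * γ ^ 2 - 4 * γ + 1 = 0) :
    IsOrderThreeExtension !![0, 0, 0; γ, γ, 0; (1 - γ) / 2, (1 - γ) / 2, γ] ![0, 2 * γ, 1]
      (esdirk23DenseWeights γ).1 (esdirk23DenseWeights γ).2.1 (esdirk23DenseWeights γ).2.2 := by
  rw [isOrderThreeExtension_iff]
  simp only [dotProduct, esdirk23DenseWeights, Pi.one_apply, mul_one, Fin.sum_univ_three,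
    Fin.isValue, cons_val_zero, cons_val_one, add_zero, cons_val, Prod.mk.injEq, true_and,
    mul_zero, zero_mul, zero_add, one_div, ne_eq, OfNat.ofNat_ne_zero, not_false_eq_true,
    zero_pow, one_pow, mulVec, of_apply, cons_val', cons_val_fin_one]
  refine ⟨⟨?_, ?_⟩, ⟨?_, ?_⟩, ⟨?_, ?_⟩, ?_, ?_⟩
  · ring
  · ring
  · linear_combination (-3 / 2) * hγ
  · linear_combination hγ
  · linear_combination (-3 * γ - 1) * hγ
  · linear_combination (6 * γ + 2) / 3 * hγ
  · linear_combination (-2 * γ) * hγ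
  · linear_combination (8 * γ - 1) / 6 * hγ

theorem esdirk23DenseWeights_sum (γ : ℝ) :
    (esdirk23DenseWeights γ).1 + (esdirk23DenseWeights γ).2.1 + (esdirk23DenseWeights γ).2.2 =
      ![(γ + 1) / 6, (5 - 3 * γ) / 6, γ / 3] := by
  ext i
  fin_cases i <;> simp [esdirk23DenseWeights] <;> ring

theorem esdirk23_embedded_weights_eq (hγ : 2 * γ ^ 2 - 4 * γ + 1 = 0) :
    ![(6 * γ - 1) / (12 * γ), 1 / (12 * γ * (1 - 2 * γ)), (1 - 3 * γ) / (3 * (1 - 2 * γ))] =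
      ![(γ + 1) / 6, (5 - 3 * γ) / 6, γ / 3] := by
  have h₀ := ne_zero_of_esdirk23 hγ
  have h₁ : 1 - 2 * γ ≠ 0 := sub_ne_zero.2 (two_mul_ne_one_of_esdirk23 hγ).symm
  ext i
  fin_cases i
  · change (6 * γ - 1) / (12 * γ) = (γ + 1) / 6
    rw [div_eq_div_iff (by positivity) (by norm_num)]
    linear_combination -6 * hγ
  · change 1 / (12 * γ * (1 - 2 * γ)) = (5 - 3 * γ) / 6
    rw [div_eq_div_iff (by positivity) (by norm_num)]
    linear_combination (6 - 36 * γ) * hγ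
  · change (1 - 3 * γ) / (3 * (1 - 2 * γ)) = γ / 3
    rw [div_eq_div_iff (by positivity) (by norm_num)]
    linear_combination 3 * hγ

end ESDIRK23

/-- There is a unique order-3 continuous extension of the ESDIRK23 method;
it satisfies b̄(1) = b̂ (the embedded weights), and consequently there is no
order-3 continuous extension with b̄(1) = b (the advancing weights). -/
theorem esdirk23_order3_continuous_extension
    (γ : ℝ) (hγ : γ = (2 - Real.sqrt 2) / 2)
    (c : Fin 3 → ℝ) (hc : c = ![0, 2 * γ, 1])
    (A : Matrix (Fin 3) (Fin 3) ℝ)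
    (hA : A = !![0, 0, 0; γ, γ, 0; (1 - γ) / 2, (1 - γ) / 2, γ])
    (b : Fin 3 → ℝ) (hb : b = ![(1 - γ) / 2, (1 - γ) / 2, γ])
    (bhat : Fin 3 → ℝ)
    (hbhat : bhat = ![(6 * γ - 1) / (12 * γ), 1 / (12 * γ * (1 - 2 * γ)),
      (1 - 3 * γ) / (3 * (1 - 2 * γ))])
    (e : Fin 3 → ℝ) (he : e = ![1, 1, 1]) :
    (∃! B : (Fin 3 → ℝ) × (Fin 3 → ℝ) × (Fin 3 → ℝ),
        ∀ θ : ℝ,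
          (θ • B.1 + θ ^ 2 • B.2.1 + θ ^ 3 • B.2.2) ⬝ᵥ e = θ ∧
          (θ • B.1 + θ ^ 2 • B.2.1 + θ ^ 3 • B.2.2) ⬝ᵥ c = θ ^ 2 / 2 ∧
          (θ • B.1 + θ ^ 2 • B.2.1 + θ ^ 3 • B.2.2) ⬝ᵥ (fun i => c i ^ 2) = θ ^ 3 / 3 ∧
          (θ • B.1 + θ ^ 2 • B.2.1 + θ ^ 3 • B.2.2) ⬝ᵥ (A *ᵥ c) = θ ^ 3 / 6) ∧
    (∀ b₁ b₂ b₃ : Fin 3 → ℝ,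
        (∀ θ : ℝ,
          (θ • b₁ + θ ^ 2 • b₂ + θ ^ 3 • b₃) ⬝ᵥ e = θ ∧
          (θ • b₁ + θ ^ 2 • b₂ + θ ^ 3 • b₃) ⬝ᵥ c = θ ^ 2 / 2 ∧
          (θ • b₁ + θ ^ 2 • b₂ + θ ^ 3 • b₃) ⬝ᵥ (fun i => c i ^ 2) = θ ^ 3 / 3 ∧
          (θ • b₁ + θ ^ 2 • b₂ + θ ^ 3 • b₃) ⬝ᵥ (A *ᵥ c) = θ ^ 3 / 6) →
        b₁ + b₂ + b₃ = bhat) ∧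
    ¬∃ b₁ b₂ b₃ : Fin 3 → ℝ,
        (∀ θ : ℝ,
          (θ • b₁ + θ ^ 2 • b₂ + θ ^ 3 • b₃) ⬝ᵥ e = θ ∧
          (θ • b₁ + θ ^ 2 • b₂ + θ ^ 3 • b₃) ⬝ᵥ c = θ ^ 2 / 2 ∧
          (θ • b₁ + θ ^ 2 • b₂ + θ ^ 3 • b₃) ⬝ᵥ (fun i => c i ^ 2) = θ ^ 3 / 3 ∧
          (θ • b₁ + θ ^ 2 • b₂ + θ ^ 3 • b₃) ⬝ᵥ (A *ᵥ c) = θ ^ 3 / 6) ∧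
        b₁ + b₂ + b₃ = b := by
  subst hb hbhat
  obtain rfl : e = 1 := he.trans (by ext i; fin_cases i <;> rfl)
  have hq : 2 * γ ^ 2 - 4 * γ + 1 = 0 := by
    rw [hγ]
    linear_combination Real.sq_sqrt (zero_le_two (α := ℝ)) / 2
  have hnodes : Function.Injective c := hc ▸ esdirk23_nodes_injective hq
  have hW : IsOrderThreeExtension A c (esdirk23DenseWeights γ).1 (esdirk23DenseWeights γ).2.1
      (esdirk23DenseWeights γ).2.2 := hc ▸ hA ▸ isOrderThreeExtension_esdirk23DenseWeights hq
  have hsum (b₁ b₂ b₃ : Fin 3 → ℝ) (h : IsOrderThreeExtension A c b₁ b₂ b₃) :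
      b₁ + b₂ + b₃ = ![(γ + 1) / 6, (5 - 3 * γ) / 6, γ / 3] := by
    obtain ⟨rfl, rfl, rfl⟩ := Prod.ext_iff.1 (h.unique hnodes hW)
    exact esdirk23DenseWeights_sum γ
  refine ⟨⟨esdirk23DenseWeights γ, hW, fun _ hB => IsOrderThreeExtension.unique hnodes hB hW⟩,
    fun b₁ b₂ b₃ h => (hsum b₁ b₂ b₃ h).trans (esdirk23_embedded_weights_eq hq).symm, ?_⟩
  rintro ⟨b₁, b₂, b₃, h, hb⟩
  have h₂ : γ / 3 = γ := by simpa using congrFun ((hsum b₁ b₂ b₃ h).symm.trans hb) 2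
  exact ne_zero_of_esdirk23 hq (by linarith)
end

section
/- Let γ ∈ ℝ with γ ≠ 0 and γ ≠ 1/2. Define c = (0, 2γ, 1, 1), b̂₁ = (−4γ² + 6γ − 1)/(4γ), b̂₂ = (−2γ + 1)/(4γ), b₁ = (6γ − 1)/(12γ), b₂ = −1/(12γ(2γ − 1)), b₃ = (−6γ² + 6γ − 1)/(3(2γ − 1)), and let A ∈ ℝ^{4×4} have rows (0,0,0,0), (γ,γ,0,0), (b̂₁,b̂₂,γ,0), (b₁,b₂,b₃,γ) (Kværnø's 4-stage ESDIRK family). Then the advancing weights b = (b₁,b₂,b₃,γ) satisfy the order-3 conditions bᵀe = 1, bᵀCe = 1/2, bᵀC²e = 1/3, and bᵀACe = 1/6, and the embedded weights b̂ = (b̂₁,b̂₂,γ,0) satisfy the order-2 conditions b̂ᵀe = 1 and b̂ᵀCe = 1/2, where C = diag(c) and e = (1,1,1,1)ᵀ. -/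
/-!
With c = (0, 2γ, 1, 1) every condition is a scalar identity in the weights, and those for the
advancing method reduce to two: the first moment 2γ b₂ + b₃ + γ = 1/2 and γ (2γ - 1) b₂ = -1/12.
Indeed bᵀC²e differs from bᵀCe by 2γ (2γ - 1) b₂, and since both weight vectors are rows of A,
the last two entries of Ac are b̂ᵀc = bᵀc = 1/2, so that bᵀAc = 2γ² b₂ + (b₃ + γ) / 2.
-/

open Matrix

namespace Kvaerno32

variable {γ : ℝ}

theorem embedded_weight_sum (hγ0 : γ ≠ 0) {bh₁ bh₂ : ℝ}
    (hbh₁ : bh₁ = (-(4 * γ ^ 2) + 6 * γ - 1) / (4 * γ))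
    (hbh₂ : bh₂ = (-(2 * γ) + 1) / (4 * γ)) :
    bh₁ + bh₂ + γ = 1 := by
  subst hbh₁ hbh₂
  field_simp
  ring

theorem embedded_first_moment (hγ0 : γ ≠ 0) {bh₂ : ℝ}
    (hbh₂ : bh₂ = (-(2 * γ) + 1) / (4 * γ)) :
    2 * γ * bh₂ + γ = 1 / 2 := by
  subst hbh₂
  field_simp
  ring

-- Both forms, because `field_simp` may look for the side condition after normalizing it.
theorem two_mul_sub_one_ne_zero (hγhalf : γ ≠ 1 / 2) : 2 * γ - 1 ≠ 0 ∧ γ * 2 - 1 ≠ 0 := by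
  constructor <;>
  · contrapose! hγhalf
    linarith

theorem advancing_weight_sum (hγ0 : γ ≠ 0) (hγhalf : γ ≠ 1 / 2) {b₁ b₂ b₃ : ℝ}
    (hb₁ : b₁ = (6 * γ - 1) / (12 * γ))
    (hb₂ : b₂ = -1 / (12 * γ * (2 * γ - 1)))
    (hb₃ : b₃ = (-(6 * γ ^ 2) + 6 * γ - 1) / (3 * (2 * γ - 1))) :
    b₁ + b₂ + b₃ + γ = 1 := by
  obtain ⟨_, _⟩ := two_mul_sub_one_ne_zero hγhalf
  subst hb₁ hb₂ hb₃
  field_simp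
  ring

theorem advancing_first_moment (hγ0 : γ ≠ 0) (hγhalf : γ ≠ 1 / 2) {b₂ b₃ : ℝ}
    (hb₂ : b₂ = -1 / (12 * γ * (2 * γ - 1)))
    (hb₃ : b₃ = (-(6 * γ ^ 2) + 6 * γ - 1) / (3 * (2 * γ - 1))) :
    2 * γ * b₂ + b₃ + γ = 1 / 2 := by
  obtain ⟨_, _⟩ := two_mul_sub_one_ne_zero hγhalf
  subst hb₂ hb₃
  field_simp
  ring

theorem gamma_mul_two_mul_sub_one_mul_b₂ (hγ0 : γ ≠ 0) (hγhalf : γ ≠ 1 / 2) {b₂ : ℝ}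
    (hb₂ : b₂ = -1 / (12 * γ * (2 * γ - 1))) :
    γ * (2 * γ - 1) * b₂ = -1 / 12 := by
  obtain ⟨_, _⟩ := two_mul_sub_one_ne_zero hγhalf
  subst hb₂
  field_simp

end Kvaerno32

open Kvaerno32 in
/-- Kværnø's 4-stage ESDIRK 3/2 family: for every γ ≠ 0, γ ≠ 1/2, the advancing
weights b = (b₁,b₂,b₃,γ) satisfy the order-3 conditions and the embedded weights
b̂ = (b̂₁,b̂₂,γ,0) satisfy the order-2 conditions. -/
theorem kvaerno32_order_conditions
    (γ : ℝ) (hγ0 : γ ≠ 0) (hγhalf : γ ≠ 1 / 2)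
    (c : Fin 4 → ℝ) (hc : c = ![0, 2 * γ, 1, 1])
    (bh₁ bh₂ b₁ b₂ b₃ : ℝ)
    (hbh₁ : bh₁ = (-(4 * γ ^ 2) + 6 * γ - 1) / (4 * γ))
    (hbh₂ : bh₂ = (-(2 * γ) + 1) / (4 * γ))
    (hb₁ : b₁ = (6 * γ - 1) / (12 * γ))
    (hb₂ : b₂ = -1 / (12 * γ * (2 * γ - 1)))
    (hb₃ : b₃ = (-(6 * γ ^ 2) + 6 * γ - 1) / (3 * (2 * γ - 1)))
    (A : Matrix (Fin 4) (Fin 4) ℝ)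
    (hA : A = !![0, 0, 0, 0; γ, γ, 0, 0; bh₁, bh₂, γ, 0; b₁, b₂, b₃, γ])
    (b : Fin 4 → ℝ) (hb : b = ![b₁, b₂, b₃, γ])
    (bhat : Fin 4 → ℝ) (hbhat : bhat = ![bh₁, bh₂, γ, 0])
    (e : Fin 4 → ℝ) (he : e = ![1, 1, 1, 1]) :
    (b ⬝ᵥ e = 1 ∧ b ⬝ᵥ c = 1 / 2 ∧ b ⬝ᵥ (fun i => c i ^ 2) = 1 / 3 ∧
      b ⬝ᵥ (A *ᵥ c) = 1 / 6) ∧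
    (bhat ⬝ᵥ e = 1 ∧ bhat ⬝ᵥ c = 1 / 2) := by
  have hbhat_e := embedded_weight_sum hγ0 hbh₁ hbh₂
  have hbhat_c := embedded_first_moment hγ0 hbh₂
  have hb_e := advancing_weight_sum hγ0 hγhalf hb₁ hb₂ hb₃
  have hb_c := advancing_first_moment hγ0 hγhalf hb₂ hb₃
  have hb₂_scaled := gamma_mul_two_mul_sub_one_mul_b₂ hγ0 hγhalf hb₂
  subst hc hA hb hbhat he
  simp only [dotProduct, mulVec, Fin.sum_univ_four, of_apply, cons_val', cons_val_zero,
    cons_val_one, cons_val, cons_val_fin_one]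
  refine ⟨⟨?_, ?_, ?_, ?_⟩, ?_, ?_⟩
  · linear_combination hb_e
  · linear_combination hb_c
  · linear_combination hb_c + 2 * hb₂_scaled
  · linear_combination b₃ * hbhat_c + (γ + 1 / 2) * hb_c + hb₂_scaled
  · linear_combination hbhat_e
  · linear_combination hbhat_c
end
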